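/- For every complex number x, ∑_{ν ∈ ℤ} (-1)^ν J_{4ν}(x) = cos(x/√2), ∑_{ν ∈ ℤ} (-1)^ν J_{4ν+1}(x) = (1/√2) sin(x/√2), and ∑_{ν ∈ ℤ} (-1)^ν J_{4ν+2}(x) = 0. -/

import Mathlib

/-!
Cauchy-multiplying the exponential series of `x t / 2` and `-x / (2 t)` and grouping by the
power of `t` gives the generating function `∑ₙ Jₙ(x) tⁿ = exp (x / 2 * (t - t⁻¹))` for `t ≠ 0`.
Averaging `t⁻ʳ exp (x / 2 * (t - t⁻¹))` over the four points `t = iʲ ω`, `ω = (1 + i) / √2`,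
keeps exactly the orders `n = 4ν + r`, each with weight `ω ^ (4ν) = (-1)^ν`. At these points
`t - t⁻¹ = ± i √2`, so the three sums come out as combinations of `exp (± i x / √2)`.
-/

open scoped Real

/-- Bessel function of the first kind of natural order `n`, via its power series. -/
noncomputable def besselJNat (n : ℕ) (x : ℂ) : ℂ :=
  ∑' m : ℕ, (-1 : ℂ) ^ m / ((m.factorial : ℂ) * ((m + n).factorial : ℂ)) * (x / 2) ^ (2 * m + n)

/-- Bessel function of the first kind of integer order, with `J_{-n} = (-1)^n J_n`. -/
noncomputable def besselJ (n : ℤ) (x : ℂ) : ℂ :=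
  if 0 ≤ n then besselJNat n.toNat x else (-1 : ℂ) ^ n.natAbs * besselJNat n.natAbs x

open Complex Nat Finset

namespace IsPrimitiveRoot

variable {K : Type*} [Field K] {ζ : K} {m : ℕ}

theorem sum_pow_zpow_eq_ite (hζ : IsPrimitiveRoot ζ m) (k : ℤ) :
    ∑ j ∈ range m, (ζ ^ k) ^ j = if (m : ℤ) ∣ k then (m : K) else 0 := by
  split_ifs with hk
  · simp [(hζ.zpow_eq_one_iff_dvd k).mpr hk]
  · have hne : ζ ^ k ≠ 1 := mt (hζ.zpow_eq_one_iff_dvd k).mp hk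
    rw [geom_sum_eq hne, ← zpow_natCast, ← zpow_mul, mul_comm, zpow_mul, zpow_natCast,
      hζ.pow_eq_one, one_zpow, sub_self, zero_div]

theorem hasSum_comp_mul_add [TopologicalSpace K] [IsTopologicalRing K] [NeZero m]
    (hζ : IsPrimitiveRoot ζ m) {f : ℤ → K} {a : ℕ → K}
    (hf : ∀ j ∈ range m, HasSum (fun n => f n * (ζ ^ j) ^ n) (a j)) (r : ℤ) :
    HasSum (fun ν : ℤ => f (m * ν + r)) ((m : K)⁻¹ * ∑ j ∈ range m, (ζ ^ j) ^ (-r) * a j) := by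
  have hm : (m : K) ≠ 0 := hζ.neZero'.ne
  have hζ0 : ζ ≠ 0 := hζ.ne_zero (NeZero.ne m)
  have hfilter : HasSum (fun n => if (m : ℤ) ∣ n - r then f n else 0)
      ((m : K)⁻¹ * ∑ j ∈ range m, (ζ ^ j) ^ (-r) * a j) := by
    refine ((hasSum_sum fun j hj => (hf j hj).mul_left ((ζ ^ j) ^ (-r))).mul_left _).congr_fun ?_
    intro n
    have hmix : ∑ j ∈ range m, (ζ ^ j) ^ (-r) * (f n * (ζ ^ j) ^ n)
        = f n * ∑ j ∈ range m, (ζ ^ (n - r)) ^ j := by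
      rw [mul_sum]
      refine sum_congr rfl fun j _ => ?_
      rw [← zpow_natCast, ← zpow_natCast, ← zpow_mul, ← zpow_mul, ← zpow_mul, sub_eq_add_neg,
        add_mul, zpow_add₀ hζ0, mul_comm n, mul_comm (-r)]
      ring
    rw [hmix, hζ.sum_pow_zpow_eq_ite]
    split_ifs
    · field_simp
    · simp
  have hinj : Function.Injective fun ν : ℤ => (m : ℤ) * ν + r :=
    (add_left_injective r).comp (mul_right_injective₀ (NeZero.ne (m : ℤ)))
  rw [← hinj.hasSum_iff] at hfilter
  · simpa [Function.comp_def] using hfilter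
  · rintro n hn
    rw [if_neg]
    rintro ⟨ν, hν⟩
    exact hn ⟨ν, by simp only; omega⟩

end IsPrimitiveRoot

theorem besselJ_eq_tsum (n : ℤ) (x : ℂ) :
    besselJ n x = ∑' m : ℕ, (-x / 2) ^ (m + (-n).toNat) / (m + (-n).toNat)! *
      ((x / 2) ^ (m + n.toNat) / (m + n.toNat)!) := by
  rw [besselJ]
  split_ifs with hn
  · obtain ⟨k, rfl⟩ := Int.eq_ofNat_of_zero_le hn
    refine tsum_congr fun m => ?_
    rw [Int.toNat_natCast, Int.toNat_neg_natCast, add_zero, neg_div, neg_pow (x / 2)]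
    ring
  · obtain ⟨k, rfl⟩ := Int.exists_eq_neg_ofNat (le_of_not_ge hn)
    rw [besselJNat, ← tsum_mul_left]
    refine tsum_congr fun m => ?_
    rw [neg_neg, Int.toNat_natCast, Int.toNat_neg_natCast, Int.natAbs_neg,
      Int.natAbs_natCast, add_zero, neg_div, neg_pow (x / 2)]
    ring

/-- `(n, m) ↦ (p, q)` with `q - p = n` and `min p q = m`. In the product of the exponential
series of `-x / (2 t)` and `x t / 2`, the term `(p, q)` carries the power `t ^ (q - p)`. -/
def besselIndexEquiv : ℤ × ℕ ≃ ℕ × ℕ where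
  toFun nm := (nm.2 + (-nm.1).toNat, nm.2 + nm.1.toNat)
  invFun pq := ((pq.2 : ℤ) - pq.1, min pq.1 pq.2)
  left_inv := by
    rintro ⟨n, m⟩
    dsimp only
    ext <;> dsimp only <;> omega
  right_inv := by
    rintro ⟨p, q⟩
    dsimp only
    ext <;> dsimp only <;> omega

theorem hasSum_pow_div_factorial_mul_pow_div_factorial (a b : ℂ) :
    HasSum (fun pq : ℕ × ℕ => a ^ pq.1 / (pq.1 ! : ℂ) * (b ^ pq.2 / (pq.2 ! : ℂ)))
      (exp (a + b)) := by
  have hexp (z : ℂ) : HasSum (fun k : ℕ => z ^ k / (k ! : ℂ)) (exp z) := by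
    rw [exp_eq_exp_ℂ]; exact NormedSpace.expSeries_div_hasSum_exp z
  rw [exp_add]
  exact (hexp a).mul (f := fun k => a ^ k / (k ! : ℂ)) (g := fun k => b ^ k / (k ! : ℂ)) (hexp b)
    (summable_mul_of_summable_norm (f := fun k => a ^ k / (k ! : ℂ))
    (g := fun k => b ^ k / (k ! : ℂ)) (NormedSpace.norm_expSeries_div_summable a)
    (NormedSpace.norm_expSeries_div_summable b))

theorem hasSum_besselJ_mul_zpow (x : ℂ) {t : ℂ} (ht : t ≠ 0) :
    HasSum (fun n : ℤ => besselJ n x * t ^ n) (exp (x / 2 * (t - t⁻¹))) := by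
  have hF := besselIndexEquiv.hasSum_iff.mpr
    (hasSum_pow_div_factorial_mul_pow_div_factorial (-x / 2 * t⁻¹) (x / 2 * t))
  rw [show -x / 2 * t⁻¹ + x / 2 * t = x / 2 * (t - t⁻¹) by ring] at hF
  have hterm (n : ℤ) (m : ℕ) : (-x / 2 * t⁻¹) ^ (m + (-n).toNat) / (m + (-n).toNat)! *
      ((x / 2 * t) ^ (m + n.toNat) / (m + n.toNat)!) = t ^ n * ((-x / 2) ^ (m + (-n).toNat) /
      (m + (-n).toNat)! * ((x / 2) ^ (m + n.toNat) / (m + n.toNat)!)) := by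
    have hn : t ^ n * t ^ (m + (-n).toNat) = t ^ (m + n.toNat) := by
      rw [← zpow_natCast, ← zpow_natCast, ← zpow_add₀ ht]
      congr 1
      omega
    rw [mul_pow, mul_pow, inv_pow, ← hn]
    field_simp
  refine hF.prod_fiberwise fun n => ?_
  have hfiber := (hF.summable.prod_factor n).hasSum
  simp only [Function.comp_apply, besselIndexEquiv, Equiv.coe_fn_mk, hterm] at hfiber ⊢
  rwa [tsum_mul_left, ← besselJ_eq_tsum, mul_comm] at hfiber

theorem hasSum_zpow_mul_besselJ_mul_add {ζ u : ℂ} {m : ℕ} [NeZero m] (hζ : IsPrimitiveRoot ζ m)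
    (hu : u ≠ 0) (x : ℂ) (r : ℤ) :
    HasSum (fun ν : ℤ => (u ^ m) ^ ν * besselJ (m * ν + r) x) ((m : ℂ)⁻¹ *
      ∑ j ∈ range m, (ζ ^ j * u) ^ (-r) * exp (x / 2 * (ζ ^ j * u - (ζ ^ j * u)⁻¹))) := by
  have hζ0 : ζ ≠ 0 := hζ.ne_zero (NeZero.ne m)
  have h := hζ.hasSum_comp_mul_add (f := fun n => besselJ n x * u ^ n)
    (a := fun j => exp (x / 2 * (ζ ^ j * u - (ζ ^ j * u)⁻¹)))
    (fun j _ => (hasSum_besselJ_mul_zpow x (mul_ne_zero (pow_ne_zero j hζ0) hu)).congr_fun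
      fun n => by rw [mul_zpow]; ring) r
  have hsum : u ^ (-r) * ((m : ℂ)⁻¹ * ∑ j ∈ range m, (ζ ^ j) ^ (-r) *
      exp (x / 2 * (ζ ^ j * u - (ζ ^ j * u)⁻¹))) = (m : ℂ)⁻¹ *
      ∑ j ∈ range m, (ζ ^ j * u) ^ (-r) * exp (x / 2 * (ζ ^ j * u - (ζ ^ j * u)⁻¹)) := by
    simp only [mul_sum, mul_zpow]
    exact sum_congr rfl fun j _ => by ring
  refine hsum ▸ (h.mul_left (u ^ (-r))).congr_fun fun ν => ?_
  rw [zpow_add₀ hu, zpow_mul, zpow_natCast, zpow_neg]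
  field_simp

noncomputable def ω : ℂ := (1 + I) / (Real.sqrt 2 : ℂ)

theorem ofReal_sqrt_two_sq : (Real.sqrt 2 : ℂ) ^ 2 = 2 := by
  rw [← ofReal_pow, Real.sq_sqrt zero_le_two, ofReal_ofNat]

theorem ofReal_sqrt_two_ne_zero : (Real.sqrt 2 : ℂ) ≠ 0 := by
  rw [ofReal_ne_zero]; positivity

theorem ω_sq : ω ^ 2 = I := by
  rw [ω, div_pow, ofReal_sqrt_two_sq]
  linear_combination (1 / 2 : ℂ) * I_sq

theorem ω_pow_four : ω ^ 4 = -1 := by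
  rw [show 4 = 2 * 2 by rfl, pow_mul, ω_sq, I_sq]

theorem ω_ne_zero : ω ≠ 0 := by
  rw [ω]; exact div_ne_zero (by simp [Complex.ext_iff]) ofReal_sqrt_two_ne_zero

theorem ω_inv : ω⁻¹ = (1 - I) / (Real.sqrt 2 : ℂ) := by
  refine inv_eq_of_mul_eq_one_right ?_
  have hsqrt := ofReal_sqrt_two_ne_zero
  rw [ω]
  field_simp
  linear_combination -I_sq - ofReal_sqrt_two_sq

theorem sum_range_four_I_pow_mul (g : ℂ → ℂ) (t : ℂ) :
    ∑ j ∈ range 4, g (I ^ j * t) = g t + g (I * t) + g (-t) + g (-(I * t)) := by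
  simp [sum_range_succ, pow_succ]

theorem tsum_neg_one_zpow_mul_besselJ_four_mul_add (x : ℂ) (r : ℤ) :
    ∑' ν : ℤ, (-1 : ℂ) ^ ν * besselJ (4 * ν + r) x =
      4⁻¹ * ((ω ^ (-r) + (I * ω) ^ (-r)) * exp (x / (Real.sqrt 2 : ℂ) * I) +
        ((-ω) ^ (-r) + (-(I * ω)) ^ (-r)) * exp (-(x / (Real.sqrt 2 : ℂ) * I))) := by
  have h := (hasSum_zpow_mul_besselJ_mul_add isPrimitiveRoot_I ω_ne_zero x r).tsum_eq
  rw [sum_range_four_I_pow_mul (fun t => t ^ (-r) * exp (x / 2 * (t - t⁻¹)))] at h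
  have hsqrt := ofReal_sqrt_two_ne_zero
  have e1 : x / 2 * (ω - ω⁻¹) = x / (Real.sqrt 2 : ℂ) * I := by
    rw [ω_inv, ω]
    field_simp
    ring
  have e2 : x / 2 * (I * ω - (I * ω)⁻¹) = x / (Real.sqrt 2 : ℂ) * I := by
    rw [mul_inv, inv_I, ω_inv, ω]
    field_simp
    ring_nf
  have e3 (t : ℂ) : x / 2 * (-t - (-t)⁻¹) = -(x / 2 * (t - t⁻¹)) := by rw [inv_neg]; ring
  simp only [e3, e1, e2] at h
  rw [ω_pow_four, Nat.cast_ofNat] at h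
  rw [h]
  ring

theorem stmt_11 (x : ℂ) :
    (∑' ν : ℤ, (-1 : ℂ) ^ ν * besselJ (4 * ν) x = Complex.cos (x / (Real.sqrt 2 : ℝ))) ∧
    (∑' ν : ℤ, (-1 : ℂ) ^ ν * besselJ (4 * ν + 1) x
        = (1 / (Real.sqrt 2 : ℂ)) * Complex.sin (x / (Real.sqrt 2 : ℝ))) ∧
    (∑' ν : ℤ, (-1 : ℂ) ^ ν * besselJ (4 * ν + 2) x = 0) := by
  refine ⟨?_, ?_, ?_⟩
  · have h := tsum_neg_one_zpow_mul_besselJ_four_mul_add x 0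
    simp only [add_zero, neg_zero, zpow_zero] at h
    rw [h, cos, neg_mul]
    ring
  · rw [tsum_neg_one_zpow_mul_besselJ_four_mul_add, sin, neg_mul]
    simp only [zpow_neg, zpow_one, inv_neg, mul_inv, ω_inv, inv_I]
    field_simp
    ring_nf
    rw [I_sq]
    ring
  · rw [tsum_neg_one_zpow_mul_besselJ_four_mul_add]
    simp [mul_pow, ω_sq]
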